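/- Let N = 2^p − 1 and p = 2^q − 1 both be primes, k_b = Σ_{j=0}^{q−1} 2^(2^j) and k_l = 1 + k_b, with N not dividing k_b, and r a positive integer with k_l + r·k_b ≡ 0 (mod N). Then for all positive integers k and all i ≥ 0, with m = (q−1) + r·q + i·q·(2^p−1), one has F_{qk} + F_{qk+1} + ... + F_{qk+m} ≡ q − 1 + r·q (mod 2^p − 1), where F_j = 2^(2^j) + 1 is the j-th Fermat number. -/

import Mathlib

/-!
Modulo `N = 2 ^ p - 1` we have `2 ^ p = 1`, and modulo `p = 2 ^ q - 1` we have `2 ^ q = 1`; hence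
`2 ^ (2 ^ n) mod N` depends only on `n mod q`, and the Fermat numbers are `q`-periodic modulo `N`.
The sum runs over `q * (1 + r + i * N)` consecutive indices, so modulo `N` it equals
`(1 + r) * (kb + q) = (kl + r * kb) + (q - 1 + r * q)`, and `kl + r * kb ≡ 0` by hypothesis.
-/

open Finset

theorem Function.Periodic.sum_range_mul {M : Type*} [AddCommMonoid M] {f : ℕ → M} {c : ℕ}
    (hf : Function.Periodic f c) (n : ℕ) :
    ∑ j ∈ range (c * n), f j = n • ∑ j ∈ range c, f j := by
  induction n with
  | zero => simp
  | succ n ih =>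
    rw [Nat.mul_succ, sum_range_add, ih, succ_nsmul]
    congr 1
    exact sum_congr rfl fun j _ => by
      rw [add_comm, mul_comm, ← smul_eq_mul, hf.nsmul n j]

theorem ZMod.natCast_pow_self_sub_one {a : ℕ} (ha : 0 < a) (n : ℕ) :
    (a : ZMod (a ^ n - 1)) ^ n = 1 := by
  have h := ZMod.natCast_self (a ^ n - 1)
  rw [Nat.cast_sub (Nat.one_le_pow n a ha), Nat.cast_pow, Nat.cast_one, sub_eq_zero] at h
  exact h

theorem ZMod.two_pow_two_pow_eq_of_modEq {p q : ℕ} (hpq : p = 2 ^ q - 1) {a b : ℕ}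
    (hab : a ≡ b [MOD q]) : (2 : ZMod (2 ^ p - 1)) ^ 2 ^ a = 2 ^ 2 ^ b := by
  have hp : (2 : ZMod p) ^ q = 1 := by
    subst hpq
    exact_mod_cast ZMod.natCast_pow_self_sub_one two_pos q
  have hexp : 2 ^ a ≡ 2 ^ b [MOD p] := by
    rw [← ZMod.natCast_eq_natCast_iff]
    push_cast
    exact pow_eq_pow_of_modEq hab hp
  exact pow_eq_pow_of_modEq hexp (by exact_mod_cast ZMod.natCast_pow_self_sub_one two_pos p)

theorem stmt_19_general (p q : ℕ) (hq : Nat.Prime q) (hpq : p = 2 ^ q - 1)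
    (kb kl : ℕ) (hkb : kb = ∑ j ∈ Finset.range q, 2 ^ (2 ^ j))
    (hkl : kl = 1 + kb)
    (r : ℕ) (hrc : (2 ^ p - 1) ∣ kl + r * kb) :
    ∀ k i : ℕ, 0 < k →
      (∑ j ∈ Finset.range ((q - 1) + r * q + i * q * (2 ^ p - 1) + 1),
          (2 ^ (2 ^ (q * k + j)) + 1)) ≡ (q - 1) + r * q [MOD 2 ^ p - 1] := by
  intro k i _
  have hq1 : 1 ≤ q := hq.one_lt.le
  have hlen : q - 1 + r * q + i * q * (2 ^ p - 1) + 1 = q * (1 + r + i * (2 ^ p - 1)) := by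
    zify [hq1, Nat.one_le_two_pow]
    ring
  have hshift (j : ℕ) : (2 : ZMod (2 ^ p - 1)) ^ 2 ^ (q * k + j) = 2 ^ 2 ^ j :=
    ZMod.two_pow_two_pow_eq_of_modEq hpq (by simp [Nat.ModEq])
  have hperiodic : Function.Periodic (fun j ↦ (2 : ZMod (2 ^ p - 1)) ^ 2 ^ j + 1) q := fun j ↦ by
    dsimp only
    rw [ZMod.two_pow_two_pow_eq_of_modEq hpq (Nat.add_mod_right j q)]
  have hkb' : (kb : ZMod (2 ^ p - 1)) = ∑ j ∈ range q, (2 : ZMod (2 ^ p - 1)) ^ 2 ^ j := by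
    simp [hkb]
  have hN : ((2 ^ p - 1 : ℕ) : ZMod (2 ^ p - 1)) = 0 := ZMod.natCast_self _
  have hrc' : ((kl + r * kb : ℕ) : ZMod (2 ^ p - 1)) = 0 := (ZMod.natCast_eq_zero_iff _ _).mpr hrc
  rw [← ZMod.natCast_eq_natCast_iff, hlen]
  simp only [Nat.cast_sum, Nat.cast_add, Nat.cast_pow, Nat.cast_ofNat, Nat.cast_one, hshift]
  rw [hperiodic.sum_range_mul, sum_add_distrib, ← hkb']
  simp only [hkl, sum_const, card_range, nsmul_eq_mul, Nat.cast_add, Nat.cast_mul, Nat.cast_one,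
    mul_one, Nat.cast_pred hq1] at hrc' ⊢
  linear_combination hrc' + i * (kb + q) * hN

theorem stmt_19 (p q : ℕ) (hq : Nat.Prime q) (hpq : p = 2 ^ q - 1)
    (hp : Nat.Prime p) (hN : Nat.Prime (2 ^ p - 1))
    (kb kl : ℕ) (hkb : kb = ∑ j ∈ Finset.range q, 2 ^ (2 ^ j))
    (hkl : kl = 1 + kb)
    (hnd : ¬ (2 ^ p - 1) ∣ kb)
    (r : ℕ) (hr : 0 < r) (hrc : (2 ^ p - 1) ∣ kl + r * kb) :
    ∀ k i : ℕ, 0 < k →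
      (∑ j ∈ Finset.range ((q - 1) + r * q + i * q * (2 ^ p - 1) + 1),
          (2 ^ (2 ^ (q * k + j)) + 1)) ≡ (q - 1) + r * q [MOD 2 ^ p - 1] :=
  stmt_19_general p q hq hpq kb kl hkb hkl r hrc
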